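/- Deterministic sufficient maximum principle: under the setup of the previous statement, suppose additionally that (i) h : ℝ^N → ℝ is concave and C¹ with p̂(T) = ∇h(X̂(T)); (ii) for a.e. t, H(t, X̂(t), û(t), p̂(t)) = sup_{v ∈ U} H(t, X̂(t), v, p̂(t)); (iii) for each t, x ↦ sup_{v ∈ U} H(t, x, v, p̂(t)) is concave and the sup exists. Then for every admissible control u with X(0) = X̂(0), ∫₀ᵀ f(t, X̂(t), û(t)) dt + h(X̂(T)) ≥ ∫₀ᵀ f(t, X(t), u(t)) dt + h(X(T)). -/

import Mathlib

/-!
Compare the candidate `(X, u)` with `(X̂, û)` through `φ t = ⟪p̂ t, X t - X̂ t⟫`, which vanishes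
at `0`. Concavity of `h` together with `p̂ T = ∇h (X̂ T)` bounds `h (X T) - h (X̂ T)` by `φ T`.
Along the trajectories, `x ↦ H(t, x, û t, p̂ t)` touches the concave maximized Hamiltonian from
below at `X̂ t`, so its gradient there is a supergradient of the maximized Hamiltonian; with the
adjoint equation this gives `φ' ≤ f(t, X̂, û) - f(t, X, u)`, and integrating proves the claim.
-/

open MeasureTheory intervalIntegral Filter Set
open scoped RealInnerProductSpace Topology

theorem ConcaveOn.slope_le_of_hasDerivAt_of_le {ψ φ : ℝ → ℝ} {φ' x y : ℝ}
    (hψ : ConcaveOn ℝ univ ψ) (hle : ∀ s, φ s ≤ ψ s) (heq : φ x = ψ x)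
    (hφ : HasDerivAt φ φ' x) (hxy : x < y) : slope ψ x y ≤ φ' := by
  have hslope : ∀ s < x, slope ψ x y ≤ slope φ x s := by
    intro s hs
    calc slope ψ x y ≤ slope ψ x s :=
          hψ.slope_anti (mem_univ x) ⟨mem_univ s, hs.ne⟩ ⟨mem_univ y, hxy.ne'⟩ (hs.trans hxy).le
      _ ≤ slope φ x s := by
          rw [slope_def_field, slope_def_field, heq]
          exact div_le_div_of_nonpos_of_le (sub_nonpos.2 hs.le) (by linarith [hle s])
  have htendsto : Tendsto (slope φ x) (𝓝[<] x) (𝓝 φ') :=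
    (hasDerivAt_iff_tendsto_slope.1 hφ).mono_left (nhdsWithin_mono x fun s hs => ne_of_lt hs)
  exact ge_of_tendsto htendsto (eventually_nhdsWithin_of_forall hslope)

theorem ConcaveOn.le_add_of_hasFDerivAt_of_le {E : Type*} [NormedAddCommGroup E]
    [NormedSpace ℝ E] {κ g : E → ℝ} {g' : E →L[ℝ] ℝ} {x : E} (hκ : ConcaveOn ℝ univ κ)
    (hle : ∀ z, g z ≤ κ z) (heq : g x = κ x) (hg : HasFDerivAt g g' x) (y : E) :
    κ y ≤ κ x + g' (y - x) := by
  let ℓ : ℝ →ᵃ[ℝ] E := AffineMap.lineMap x y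
  have hline : HasDerivAt (fun s => g (ℓ s)) (g' (y - x)) 0 :=
    (by simpa [ℓ] using hg : HasFDerivAt g g' (ℓ 0)).comp_hasDerivAt 0
      AffineMap.hasDerivAt_lineMap
  have := (hκ.comp_affineMap ℓ).slope_le_of_hasDerivAt_of_le (fun s => hle _)
    (by simpa [ℓ] using heq) hline zero_lt_one
  simp only [slope_def_field, Function.comp_apply, ℓ, AffineMap.lineMap_apply_zero,
    AffineMap.lineMap_apply_one, sub_zero, div_one] at this
  linarith

theorem ConcaveOn.le_add_inner_gradient_of_le {F : Type*} [NormedAddCommGroup F]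
    [InnerProductSpace ℝ F] [CompleteSpace F] {κ g : F → ℝ} {x : F} (hκ : ConcaveOn ℝ univ κ)
    (hle : ∀ z, g z ≤ κ z) (heq : g x = κ x) (hg : DifferentiableAt ℝ g x) (y : F) :
    κ y ≤ κ x + ⟪gradient g x, y - x⟫ := by
  simpa [gradient, InnerProductSpace.toDual_symm_apply] using
    hκ.le_add_of_hasFDerivAt_of_le hle heq hg.hasFDerivAt y

theorem hamiltonian_le_add_inner_gradient {F V : Type*} [NormedAddCommGroup F]
    [InnerProductSpace ℝ F] [CompleteSpace F] {H : F → V → ℝ} {U : Set V} {Hmax : F → ℝ}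
    (hconc : ConcaveOn ℝ univ Hmax)
    (hgreatest : ∀ x, IsGreatest {y | ∃ v ∈ U, y = H x v} (Hmax x))
    {x₀ : F} {u₀ : V} (hu₀ : u₀ ∈ U) (hmax : ∀ v ∈ U, H x₀ v ≤ H x₀ u₀)
    (hdiff : DifferentiableAt ℝ (fun x => H x u₀) x₀) {x : F} {v : V} (hv : v ∈ U) :
    H x v ≤ H x₀ u₀ + ⟪gradient (fun x => H x u₀) x₀, x - x₀⟫ := by
  have hle : ∀ z, H z u₀ ≤ Hmax z := fun z => (hgreatest z).2 ⟨u₀, hu₀, rfl⟩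
  have heq : H x₀ u₀ = Hmax x₀ := by
    obtain ⟨w, hw, hHmax⟩ := (hgreatest x₀).1
    exact (hle x₀).antisymm (hHmax ▸ hmax w hw)
  calc H x v ≤ Hmax x := (hgreatest x).2 ⟨v, hv, rfl⟩
    _ ≤ Hmax x₀ + ⟪gradient (fun x => H x u₀) x₀, x - x₀⟫ :=
      hconc.le_add_inner_gradient_of_le hle heq hdiff x
    _ = H x₀ u₀ + ⟪gradient (fun x => H x u₀) x₀, x - x₀⟫ := by rw [heq]

/-- Deterministic sufficient maximum principle (σ ≡ 0, no Markov chain specialization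
of Theorem 4.1): with `H(t,x,v,p) = f(t,x,v) + ⟪b(t,x,v), p⟫`, if `h` is concave and
`C¹`, `p̂` solves the adjoint equation with `p̂(T) = ∇h(X̂(T))`, `û` maximizes the
Hamiltonian along `X̂`, and `x ↦ max_v H(t,x,v,p̂(t))` is concave (with the max
attained), then `û` is optimal: for every admissible control `u` with `X(0) = X̂(0)`,
`∫₀ᵀ f(t,X̂,û) dt + h(X̂(T)) ≥ ∫₀ᵀ f(t,X,u) dt + h(X(T))`. -/
theorem deterministic_sufficient_maximum_principle (N P : ℕ) (T : ℝ) (hT : 0 < T)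
    (U : Set (EuclideanSpace ℝ (Fin P)))
    (b : ℝ → EuclideanSpace ℝ (Fin N) → EuclideanSpace ℝ (Fin P) → EuclideanSpace ℝ (Fin N))
    (f : ℝ → EuclideanSpace ℝ (Fin N) → EuclideanSpace ℝ (Fin P) → ℝ)
    (h : EuclideanSpace ℝ (Fin N) → ℝ)
    (H : ℝ → EuclideanSpace ℝ (Fin N) → EuclideanSpace ℝ (Fin P) →
      EuclideanSpace ℝ (Fin N) → ℝ)
    (hH : ∀ t x v p, H t x v p = f t x v + ⟪b t x v, p⟫)
    (u uhat : ℝ → EuclideanSpace ℝ (Fin P))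
    (hu : ∀ t, u t ∈ U) (huhat : ∀ t, uhat t ∈ U)
    (X Xhat phat : ℝ → EuclideanSpace ℝ (Fin N))
    (hX : ∀ t ∈ Set.Icc (0:ℝ) T, HasDerivAt X (b t (X t) (u t)) t)
    (hXhat : ∀ t ∈ Set.Icc (0:ℝ) T, HasDerivAt Xhat (b t (Xhat t) (uhat t)) t)
    (hX0 : X 0 = Xhat 0)
    -- (i) h concave and C¹, with terminal condition for the adjoint
    (hconc : ConcaveOn ℝ Set.univ h) (hhC1 : ContDiff ℝ 1 h)
    (hHdiff : ∀ t v, Differentiable ℝ (fun x => H t x v (phat t)))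
    (hphat : ∀ t ∈ Set.Icc (0:ℝ) T,
      HasDerivAt phat (-(gradient (fun x => H t x (uhat t) (phat t)) (Xhat t))) t)
    (hterm : phat T = gradient h (Xhat T))
    -- (ii) the maximum condition
    (hmax : ∀ t ∈ Set.Icc (0:ℝ) T, ∀ v ∈ U,
      H t (Xhat t) v (phat t) ≤ H t (Xhat t) (uhat t) (phat t))
    -- (iii) x ↦ max_v H(t,x,v,p̂(t)) exists and is concave
    (hconcH : ∀ t ∈ Set.Icc (0:ℝ) T, ∃ Hmax : EuclideanSpace ℝ (Fin N) → ℝ,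
      ConcaveOn ℝ Set.univ Hmax ∧
      ∀ x, IsGreatest {y : ℝ | ∃ v ∈ U, y = H t x v (phat t)} (Hmax x))
    -- admissibility: the running costs are integrable
    (hfint : IntervalIntegrable (fun t => f t (X t) (u t)) volume 0 T)
    (hfinthat : IntervalIntegrable (fun t => f t (Xhat t) (uhat t)) volume 0 T) :
    (∫ t in (0:ℝ)..T, f t (Xhat t) (uhat t)) + h (Xhat T)
      ≥ (∫ t in (0:ℝ)..T, f t (X t) (u t)) + h (X T) := by
  set φ : ℝ → ℝ := fun t => ⟪phat t, X t - Xhat t⟫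
  set gradH := fun t => gradient (fun x => H t x (uhat t) (phat t)) (Xhat t)
  have hφ : ∀ t ∈ Icc 0 T, HasDerivAt φ
      (⟪phat t, b t (X t) (u t) - b t (Xhat t) (uhat t)⟫ + ⟪-gradH t, X t - Xhat t⟫) t :=
    fun t ht => (hphat t ht).inner ℝ ((hX t ht).sub (hXhat t ht))
  have hφ_le : ∀ t ∈ Icc 0 T, ⟪phat t, b t (X t) (u t) - b t (Xhat t) (uhat t)⟫
      + ⟪-gradH t, X t - Xhat t⟫ ≤ f t (Xhat t) (uhat t) - f t (X t) (u t) := by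
    intro t ht
    obtain ⟨Hmax, hconcave, hgreatest⟩ := hconcH t ht
    have := hamiltonian_le_add_inner_gradient hconcave hgreatest (huhat t) (hmax t ht)
      (hHdiff t (uhat t) (Xhat t)) (hu t) (x := X t)
    rw [hH, hH] at this
    rw [inner_sub_right, inner_neg_left, real_inner_comm _ (phat t), real_inner_comm _ (phat t)]
    linarith
  have hφ_T : h (X T) ≤ h (Xhat T) + φ T := by
    simpa only [φ, hterm] using hconc.le_add_inner_gradient_of_le (fun _ => le_rfl) rfl
      (hhC1.differentiable one_ne_zero (Xhat T)) (X T)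
  have hφ_0 : φ 0 = 0 := by simp [φ, hX0]
  have hFTC := sub_le_integral_of_hasDeriv_right_of_le hT.le
    (fun t ht => (hφ t ht).continuousAt.continuousWithinAt)
    (fun t ht => (hφ t (Ioo_subset_Icc_self ht)).hasDerivWithinAt)
    ((intervalIntegrable_iff_integrableOn_Icc_of_le hT.le).1 (hfinthat.sub hfint))
    (fun t ht => hφ_le t (Ioo_subset_Icc_self ht))
  rw [integral_sub hfinthat hfint] at hFTC
  linarith
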